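/- Let C > 0 be fixed. Then, as ℓ → ∞, ∫_{C/ℓ}^{π/2} (4/(ℓ²(ℓ+1)²)) (P_ℓ(cos θ) cos θ − P_ℓ''(cos θ) sin² θ)² · (4/(ℓ²(ℓ+1)²)) P_ℓ'(cos θ)² sin θ dθ = O(1/ℓ²); that is, there exist K > 0 and ℓ₀ ∈ ℕ such that for all integers ℓ ≥ ℓ₀ the absolute value of this integral is at most K/ℓ². -/

import Mathlib

/-!
Write `P = P_ℓ`, `λ = ℓ(ℓ+1)` and `t = cos θ`. Legendre's equation `(1 - t²) P'' = 2t P' - λ P`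
turns the first factor into `((t + λ) P - 2t P')²`. The energy `P² + (1 - t²) P'² / λ` has
derivative `2t P'² / λ`, so on `[-1, 1]` it is largest at `t = ±1`, where it equals `1`; hence
`P² ≤ 1` and `sin² θ · P'² ≤ λ`. Since `sin θ ≥ 2θ/π ≥ 2C/(πℓ)` on `[C/ℓ, π/2]`, this gives
`P'² = O(λ²)`, so the first factor divided by `λ²/4` is bounded. What is left is
`(4/λ²) ∫ sin θ P'(cos θ)² dθ ≤ (4/λ²) ∫_{-1}^{1} P'² = 4/λ`, where the last integral is computed
by parts: the boundary terms give `λ` and `∫ P P'' = 0` by orthogonality of `P` to lower degrees.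
-/

open Real intervalIntegral

/-- The `n`-th Legendre polynomial via Rodrigues' formula:
`P_n(t) = (1/(2^n n!)) dⁿ/dtⁿ (t² − 1)ⁿ`. -/
noncomputable def legendreP (n : ℕ) (t : ℝ) : ℝ :=
  (1 / ((2 : ℝ) ^ n * (n.factorial : ℝ))) *
    iteratedDeriv n (fun s : ℝ => (s ^ 2 - 1) ^ n) t

open Polynomial
open scoped Nat

namespace Polynomial

variable {R : Type*} [CommRing R]

theorem eval_iterate_derivative_X_sub_C_pow_mul (a : R) (n : ℕ) (q : R[X]) :
    (derivative^[n] ((X - C a) ^ n * q)).eval a = n ! * q.eval a := by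
  rw [iterate_derivative_mul, eval_finsetSum, Finset.sum_eq_single_of_mem 0 (by simp)]
  · simp [iterate_derivative_X_sub_pow_self]
  · intro k hk hk0
    rw [iterate_derivative_X_sub_pow, eval_smul, eval_mul, eval_smul, eval_pow,
      Nat.sub_sub_self (Finset.mem_range_succ_iff.mp hk), eval_sub, eval_X, eval_C, sub_self,
      zero_pow hk0, smul_zero, zero_mul, smul_zero]

theorem eval_iterate_derivative_eq_zero_of_X_sub_C_pow_dvd {p : R[X]} {a : R} {n k : ℕ}
    (hp : (X - C a) ^ n ∣ p) (hk : k < n) : (derivative^[k] p).eval a = 0 :=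
  dvd_iff_isRoot.mp <| (dvd_pow_self _ (Nat.sub_ne_zero_of_lt hk)).trans
    (pow_sub_dvd_iterate_derivative_of_pow_dvd k hp)

theorem iterate_deriv_eval (p : ℝ[X]) (k : ℕ) :
    deriv^[k] (fun x => p.eval x) = fun x => (derivative^[k] p).eval x := by
  induction k with
  | zero => rfl
  | succ k ih =>
    rw [Function.iterate_succ_apply', ih]
    ext x
    rw [Polynomial.deriv, Function.iterate_succ_apply']

theorem integral_eval_derivative_mul_eval (p q : ℝ[X]) (a b : ℝ) :
    ∫ t in a..b, (derivative p).eval t * q.eval t =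
      p.eval b * q.eval b - p.eval a * q.eval a -
        ∫ t in a..b, p.eval t * (derivative q).eval t := by
  have h := integral_mul_deriv_eq_deriv_mul (fun x _ => q.hasDerivAt x)
    (fun x _ => p.hasDerivAt x) (q.derivative.continuous.intervalIntegrable a b)
    (p.derivative.continuous.intervalIntegrable a b)
  simpa only [mul_comm] using h

end Polynomial

lemma sq_neg_one_pow (n : ℕ) : ((-1 : ℝ) ^ n) ^ 2 = 1 := by simp [← pow_mul, pow_mul']

lemma integral_sin_mul_comp_cos {g : ℝ → ℝ} (hg : Continuous g) (a b : ℝ) :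
    ∫ θ in a..b, sin θ * g (cos θ) = ∫ t in cos b..cos a, g t := by
  rw [integral_symm, ← integral_comp_mul_deriv (fun x _ => hasDerivAt_cos x)
    continuous_sin.neg.continuousOn hg, ← integral_neg]
  simp only [Function.comp, mul_neg, mul_comm]

lemma two_div_pi_mul_le_sin {a θ : ℝ} (ha : 0 ≤ a) (haθ : a ≤ θ) (hθ : θ ≤ π / 2) :
    2 / π * a ≤ sin θ :=
  (by gcongr : 2 / π * a ≤ 2 / π * θ).trans (mul_le_sin (ha.trans haθ) hθ)

lemma sq_eval_add_le_of_legendre_ode {p : ℝ[X]} {lam : ℝ} (hlam : 0 < lam)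
    (hode : ∀ t, (t ^ 2 - 1) * (derivative (derivative p)).eval t +
      2 * t * (derivative p).eval t = lam * p.eval t)
    {t : ℝ} (ht : t ∈ Set.Icc (-1) 1) :
    p.eval t ^ 2 + (1 - t ^ 2) * (derivative p).eval t ^ 2 / lam ≤
      max (p.eval 1 ^ 2) (p.eval (-1) ^ 2) := by
  set G : ℝ → ℝ := fun s => p.eval s ^ 2 + (1 - s ^ 2) * (derivative p).eval s ^ 2 / lam
  have hG : ∀ s, HasDerivAt G (2 * s * (derivative p).eval s ^ 2 / lam) s := by
    intro s
    have h := ((p.hasDerivAt s).fun_pow 2).fun_add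
      ((((hasDerivAt_id' s).fun_pow 2).const_sub 1).fun_mul
        ((p.derivative.hasDerivAt s).fun_pow 2) |>.div_const lam)
    refine h.congr_deriv ?_
    field_simp
    linear_combination (-2 * (derivative p).eval s) * hode s
  have hGdiff : Differentiable ℝ G := fun s => (hG s).differentiableAt
  change G t ≤ _
  rcases le_total 0 t with h0 | h0
  · have hmono : MonotoneOn G (Set.Icc 0 1) :=
      monotoneOn_of_deriv_nonneg (convex_Icc 0 1) hGdiff.continuous.continuousOn
        hGdiff.differentiableOn fun s hs => by
          rw [interior_Icc] at hs
          rw [(hG s).deriv]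
          have := hs.1.le
          positivity
    calc G t ≤ G 1 := hmono ⟨h0, ht.2⟩ ⟨zero_le_one, le_rfl⟩ ht.2
      _ ≤ _ := by simp [G]
  · have hanti : AntitoneOn G (Set.Icc (-1) 0) :=
      antitoneOn_of_deriv_nonpos (convex_Icc (-1) 0) hGdiff.continuous.continuousOn
        hGdiff.differentiableOn fun s hs => by
          rw [interior_Icc] at hs
          rw [(hG s).deriv]
          exact div_nonpos_of_nonpos_of_nonneg
            (mul_nonpos_of_nonpos_of_nonneg (by linarith [hs.2]) (sq_nonneg _)) hlam.le
    calc G t ≤ G (-1) := hanti ⟨le_rfl, by norm_num⟩ ⟨ht.1, h0⟩ ht.1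
      _ ≤ _ := by simp [G]

lemma sq_mul_sub_mul_le_of_legendre_ode {p p₁ p₂ t lam : ℝ} (ht : t ^ 2 ≤ 1) (hlam : 1 ≤ lam)
    (hp : p ^ 2 ≤ 1) (hode : (t ^ 2 - 1) * p₂ + 2 * t * p₁ = lam * p) :
    (p * t - p₂ * (1 - t ^ 2)) ^ 2 ≤ 8 * lam ^ 2 + 8 * p₁ ^ 2 := by
  have hM : p * t - p₂ * (1 - t ^ 2) = (t + lam) * p - 2 * t * p₁ := by linear_combination hode
  have ht' : |t| ≤ 1 := (sq_le_one_iff_abs_le_one t).mp ht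
  have h₁ : ((t + lam) * p) ^ 2 ≤ 4 * lam ^ 2 := by
    rw [mul_pow]
    have : (t + lam) ^ 2 ≤ 4 * lam ^ 2 := by nlinarith [abs_le.mp ht']
    nlinarith [sq_nonneg p, sq_nonneg (t + lam)]
  have h₂ : (2 * t * p₁) ^ 2 ≤ 4 * p₁ ^ 2 := by nlinarith [sq_nonneg p₁]
  rw [hM]
  nlinarith [sq_nonneg ((t + lam) * p + 2 * t * p₁)]

noncomputable def rodrigues (n : ℕ) : ℝ[X] := derivative^[n] ((X ^ 2 - 1) ^ n)

lemma X_sq_sub_one_pow (n : ℕ) :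
    ((X : ℝ[X]) ^ 2 - 1) ^ n = (X - C 1) ^ n * (X - C (-1)) ^ n := by
  rw [← mul_pow]; simp only [map_one, map_neg]; ring

lemma X_sq_sub_one_mul_derivative_pow (n : ℕ) :
    ((X : ℝ[X]) ^ 2 - 1) * derivative ((X ^ 2 - 1) ^ n) =
      2 * (n : ℝ[X]) * X * (X ^ 2 - 1) ^ n := by
  cases n with
  | zero => simp
  | succ m =>
    simp only [derivative_pow, derivative_sub, derivative_one, C_eq_natCast, derivative_X]
    push_cast
    ring

lemma rodrigues_ode (n : ℕ) :
    (X ^ 2 - 1) * derivative (derivative (rodrigues n)) + 2 * X * derivative (rodrigues n) =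
      (n * (n + 1) : ℝ[X]) * rodrigues n := by
  set u : ℝ[X] := (X ^ 2 - 1) ^ n
  -- Differentiate `(X² - 1) u' = 2n X u` once, then `n` more times by Leibniz' rule.
  have hu' := congrArg derivative (X_sq_sub_one_mul_derivative_pow n)
  have hu'' : derivative^[2] u * X ^ 2 - derivative^[2] u + ((2 : ℕ) : ℝ[X]) * (derivative u * X) =
      ((2 * n : ℕ) : ℝ[X]) * u + ((2 * n : ℕ) : ℝ[X]) * (derivative u * X) := by
    simp only [derivative_mul, derivative_sub, derivative_X_pow, derivative_one,
      derivative_X, derivative_ofNat, derivative_natCast, Nat.cast_ofNat, map_ofNat] at hu'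
    simp only [Function.iterate_succ, Function.iterate_zero, Function.comp, id, u]
    push_cast
    linear_combination hu'
  have hleibniz := congrArg (derivative^[n]) hu''
  simp only [iterate_map_add, iterate_map_sub, iterate_derivative_derivative_mul_X_sq,
    iterate_derivative_derivative_mul_X, iterate_derivative_natCast_mul, nsmul_eq_mul,
    ← Function.iterate_add_apply] at hleibniz
  have h₁ : derivative (rodrigues n) = derivative^[n + 1] u :=
    (Function.iterate_succ_apply' ..).symm
  have h₂ : derivative (derivative (rodrigues n)) = derivative^[n + 2] u := by
    rw [h₁]
    exact (Function.iterate_succ_apply' ..).symm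
  rw [h₂, h₁, rodrigues]
  -- `n = 0` separately, because of the truncated subtraction in the coefficient `n * (n - 1)`
  rcases n with _ | m
  · simp at hleibniz ⊢
    linear_combination hleibniz
  push_cast at hleibniz ⊢
  linear_combination hleibniz

noncomputable def legendrePoly (n : ℕ) : ℝ[X] :=
  C (1 / ((2 : ℝ) ^ n * (n ! : ℝ))) * rodrigues n

lemma legendreP_eq_eval (n : ℕ) : legendreP n = fun t => (legendrePoly n).eval t := by
  have hu : (fun s : ℝ => (s ^ 2 - 1) ^ n) = fun s => (((X : ℝ[X]) ^ 2 - 1) ^ n).eval s := by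
    simp
  ext t
  rw [legendreP, iteratedDeriv_eq_iterate, hu, iterate_deriv_eval, legendrePoly, eval_mul,
    eval_C, rodrigues]

lemma eval_one_rodrigues (n : ℕ) : (rodrigues n).eval 1 = n ! * 2 ^ n := by
  rw [rodrigues, X_sq_sub_one_pow, eval_iterate_derivative_X_sub_C_pow_mul]
  norm_num

lemma eval_neg_one_rodrigues (n : ℕ) : (rodrigues n).eval (-1) = n ! * (-2) ^ n := by
  rw [rodrigues, X_sq_sub_one_pow, mul_comm, eval_iterate_derivative_X_sub_C_pow_mul]
  norm_num

lemma eval_one_legendrePoly (n : ℕ) : (legendrePoly n).eval 1 = 1 := by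
  rw [legendrePoly, eval_mul, eval_C, eval_one_rodrigues]
  field_simp

lemma eval_neg_one_legendrePoly (n : ℕ) : (legendrePoly n).eval (-1) = (-1) ^ n := by
  rw [legendrePoly, eval_mul, eval_C, eval_neg_one_rodrigues, neg_pow (2 : ℝ)]
  field_simp

lemma legendrePoly_ode_eval (n : ℕ) (t : ℝ) :
    (t ^ 2 - 1) * (derivative (derivative (legendrePoly n))).eval t +
      2 * t * (derivative (legendrePoly n)).eval t = n * (n + 1) * (legendrePoly n).eval t := by
  have h := congrArg (eval t) (rodrigues_ode n)
  simp only [eval_add, eval_mul, eval_sub, eval_pow, eval_X, eval_one, eval_natCast,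
    eval_ofNat] at h
  simp only [legendrePoly, derivative_C_mul, eval_mul, eval_C]
  linear_combination (1 / ((2 : ℝ) ^ n * (n ! : ℝ))) * h

lemma eval_one_derivative_legendrePoly (n : ℕ) :
    (derivative (legendrePoly n)).eval 1 = n * (n + 1) / 2 := by
  have h := legendrePoly_ode_eval n 1
  rw [eval_one_legendrePoly] at h
  linarith

lemma eval_neg_one_derivative_legendrePoly (n : ℕ) :
    (derivative (legendrePoly n)).eval (-1) = -(n * (n + 1) / 2 * (-1) ^ n) := by
  have h := legendrePoly_ode_eval n (-1)
  rw [eval_neg_one_legendrePoly] at h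
  linarith

lemma deriv_legendreP (n : ℕ) :
    deriv (legendreP n) = fun t => (derivative (legendrePoly n)).eval t := by
  rw [legendreP_eq_eval]
  exact funext fun t => Polynomial.deriv _

lemma deriv_deriv_legendreP (n : ℕ) :
    deriv (deriv (legendreP n)) = fun t => (derivative (derivative (legendrePoly n))).eval t := by
  rw [deriv_legendreP]
  exact funext fun t => Polynomial.deriv _

lemma integral_rodrigues_mul (n : ℕ) (q : ℝ[X]) {k : ℕ} (hk : k ≤ n) :
    ∫ t in (-1)..1, (rodrigues n).eval t * q.eval t =
      (-1) ^ k * ∫ t in (-1)..1,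
        (derivative^[n - k] ((X ^ 2 - 1) ^ n)).eval t * (derivative^[k] q).eval t := by
  induction k with
  | zero => simp [rodrigues]
  | succ k ih =>
    have hdvd : ∀ a : ℝ, a = 1 ∨ a = -1 → (X - C a) ^ n ∣ ((X : ℝ[X]) ^ 2 - 1) ^ n := by
      rintro a (rfl | rfl) <;> rw [X_sq_sub_one_pow]
      exacts [dvd_mul_right _ _, dvd_mul_left _ _]
    rw [ih (by omega), show n - k = n - (k + 1) + 1 by omega, Function.iterate_succ_apply',
      integral_eval_derivative_mul_eval, ← Function.iterate_succ_apply' derivative k,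
      eval_iterate_derivative_eq_zero_of_X_sub_C_pow_dvd (hdvd 1 (.inl rfl)) (by omega),
      eval_iterate_derivative_eq_zero_of_X_sub_C_pow_dvd (hdvd (-1) (.inr rfl)) (by omega)]
    ring

lemma integral_rodrigues_mul_eq_zero (n : ℕ) {q : ℝ[X]} (hq : derivative^[n] q = 0) :
    ∫ t in (-1)..1, (rodrigues n).eval t * q.eval t = 0 := by
  simp [integral_rodrigues_mul n q le_rfl, hq]

lemma iterate_derivative_rodrigues_eq_zero (n : ℕ) : derivative^[n + 2] (rodrigues n) = 0 := by
  rw [rodrigues, ← Function.iterate_add_apply]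
  apply iterate_derivative_eq_zero
  calc (((X : ℝ[X]) ^ 2 - 1) ^ n).natDegree ≤ n * 2 :=
        natDegree_pow_le_of_le n (by rw [← C_1, natDegree_X_pow_sub_C])
    _ < n + 2 + n := by omega

lemma integral_sq_eval_derivative_legendrePoly (n : ℕ) :
    ∫ t in (-1)..1, (derivative (legendrePoly n)).eval t ^ 2 = n * (n + 1) := by
  have hortho : ∫ t in (-1)..1, (legendrePoly n).eval t *
      (derivative (derivative (legendrePoly n))).eval t = 0 := by
    have h := integral_rodrigues_mul_eq_zero n (q := derivative (derivative (rodrigues n)))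
      (by rw [← Function.iterate_succ_apply, ← Function.iterate_succ_apply]
          exact iterate_derivative_rodrigues_eq_zero n)
    simp only [legendrePoly, derivative_C_mul, eval_mul, eval_C, mul_mul_mul_comm,
      integral_const_mul, h, mul_zero]
  simp only [sq]
  rw [integral_eval_derivative_mul_eval, hortho, eval_one_legendrePoly,
    eval_neg_one_legendrePoly, eval_one_derivative_legendrePoly,
    eval_neg_one_derivative_legendrePoly]
  linear_combination (n * (n + 1) / 2 : ℝ) * sq_neg_one_pow n

lemma sq_eval_legendrePoly_add_le_one {n : ℕ} (hn : 0 < n) {t : ℝ} (ht : t ∈ Set.Icc (-1) 1) :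
    (legendrePoly n).eval t ^ 2 + (1 - t ^ 2) * (derivative (legendrePoly n)).eval t ^ 2 /
      (n * (n + 1)) ≤ 1 := by
  have h := sq_eval_add_le_of_legendre_ode (by positivity) (legendrePoly_ode_eval n) ht
  rwa [eval_one_legendrePoly, eval_neg_one_legendrePoly, sq_neg_one_pow, one_pow, max_self] at h

lemma sq_eval_legendrePoly_le_one {n : ℕ} (hn : 0 < n) {t : ℝ} (ht : t ∈ Set.Icc (-1) 1) :
    (legendrePoly n).eval t ^ 2 ≤ 1 := by
  have h := sq_eval_legendrePoly_add_le_one hn ht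
  have : 0 ≤ 1 - t ^ 2 := by nlinarith [ht.1, ht.2]
  have : 0 ≤ (1 - t ^ 2) * (derivative (legendrePoly n)).eval t ^ 2 / (n * (n + 1)) := by
    positivity
  linarith

lemma sq_mul_sq_eval_derivative_legendrePoly_le {n : ℕ} (hn : 0 < n) {t : ℝ}
    (ht : t ∈ Set.Icc (-1) 1) :
    (1 - t ^ 2) * (derivative (legendrePoly n)).eval t ^ 2 ≤ n * (n + 1) := by
  have h := sq_eval_legendrePoly_add_le_one hn ht
  rw [← div_le_one (by positivity)]
  nlinarith [sq_nonneg ((legendrePoly n).eval t)]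

lemma sq_eval_derivative_legendrePoly_cos_le {C θ : ℝ} {n : ℕ} (hC : 0 < C) (hn : 0 < n)
    (hθ : θ ∈ Set.Icc (C / n) (π / 2)) :
    (derivative (legendrePoly n)).eval (cos θ) ^ 2 ≤ (π / (2 * C)) ^ 2 * (n * (n + 1)) ^ 2 := by
  have henergy := sq_mul_sq_eval_derivative_legendrePoly_le hn ⟨neg_one_le_cos θ, cos_le_one θ⟩
  rw [← sin_sq] at henergy
  set lam : ℝ := n * (n + 1)
  set q := (derivative (legendrePoly n)).eval (cos θ)
  have hsin := two_div_pi_mul_le_sin (by positivity) hθ.1 hθ.2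
  have hq : (2 / π * (C / n)) ^ 2 * q ^ 2 ≤ lam := le_trans (by gcongr) henergy
  calc q ^ 2 = (π * n / (2 * C)) ^ 2 * ((2 / π * (C / n)) ^ 2 * q ^ 2) := by
        field_simp
    _ ≤ (π * n / (2 * C)) ^ 2 * lam := by gcongr
    _ = (π / (2 * C)) ^ 2 * (n ^ 2 * lam) := by ring
    _ ≤ (π / (2 * C)) ^ 2 * lam ^ 2 := by
        rw [sq lam]
        gcongr
        simp only [lam]
        nlinarith [n.cast_nonneg (α := ℝ)]

lemma abs_legendre_integrand_le {C θ : ℝ} {n : ℕ} (hC : 0 < C) (hn : 0 < n)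
    (hθ : θ ∈ Set.Icc (C / n) (π / 2)) :
    |4 / ((n : ℝ) ^ 2 * ((n : ℝ) + 1) ^ 2) *
        ((legendrePoly n).eval (cos θ) * cos θ -
          (derivative (derivative (legendrePoly n))).eval (cos θ) * sin θ ^ 2) ^ 2 *
        (4 / ((n : ℝ) ^ 2 * ((n : ℝ) + 1) ^ 2) * (derivative (legendrePoly n)).eval (cos θ) ^ 2) *
        sin θ| ≤
      32 * (1 + (π / (2 * C)) ^ 2) * (4 / (n * (n + 1)) ^ 2) *
        (sin θ * (derivative (legendrePoly n)).eval (cos θ) ^ 2) := by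
  have hcos : cos θ ∈ Set.Icc (-1) 1 := ⟨neg_one_le_cos θ, cos_le_one θ⟩
  have hM := sq_mul_sub_mul_le_of_legendre_ode (cos_sq_le_one θ) (by norm_cast; nlinarith)
    (sq_eval_legendrePoly_le_one hn hcos) (legendrePoly_ode_eval n (cos θ))
  have hq := sq_eval_derivative_legendrePoly_cos_le hC hn hθ
  have hsin : 0 ≤ sin θ := sin_nonneg_of_nonneg_of_le_pi (le_trans (by positivity) hθ.1)
    (by linarith [hθ.2, pi_pos])
  rw [← sin_sq] at hM
  rw [← mul_pow]
  set lam : ℝ := n * (n + 1)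
  set M := (legendrePoly n).eval (cos θ) * cos θ -
    (derivative (derivative (legendrePoly n))).eval (cos θ) * sin θ ^ 2
  set q := (derivative (legendrePoly n)).eval (cos θ)
  have hlam : 0 < lam := by positivity
  have hM' : 4 / lam ^ 2 * M ^ 2 ≤ 32 * (1 + (π / (2 * C)) ^ 2) := by
    rw [div_mul_eq_mul_div, div_le_iff₀ (by positivity)]
    nlinarith
  rw [abs_of_nonneg (by positivity)]
  calc 4 / lam ^ 2 * M ^ 2 * (4 / lam ^ 2 * q ^ 2) * sin θ
      = 4 / lam ^ 2 * M ^ 2 * (4 / lam ^ 2 * (sin θ * q ^ 2)) := by ring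
    _ ≤ 32 * (1 + (π / (2 * C)) ^ 2) * (4 / lam ^ 2 * (sin θ * q ^ 2)) :=
      mul_le_mul_of_nonneg_right hM' (mul_nonneg (by positivity) (mul_nonneg hsin (sq_nonneg q)))
    _ = _ := by ring

lemma integral_sin_mul_sq_eval_derivative_legendrePoly_cos_le (n : ℕ) {a b : ℝ} (ha : 0 ≤ a)
    (hab : a ≤ b) (hb : b ≤ π) :
    ∫ θ in a..b, sin θ * (derivative (legendrePoly n)).eval (cos θ) ^ 2 ≤ n * (n + 1) := by
  have hg : Continuous fun t => (derivative (legendrePoly n)).eval t ^ 2 := by fun_prop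
  rw [integral_sin_mul_comp_cos hg, ← integral_sq_eval_derivative_legendrePoly n]
  exact integral_mono_interval (neg_one_le_cos b)
    (cos_le_cos_of_nonneg_of_le_pi ha hb hab) (cos_le_one a)
    (.of_forall fun t => sq_nonneg _) (hg.intervalIntegrable _ _)

theorem legendre_second_deriv_sq_deriv_sq_small (C : ℝ) (hC : 0 < C) :
    ∃ K > 0, ∃ ℓ₀ : ℕ, ∀ ℓ : ℕ, ℓ₀ ≤ ℓ →
      |∫ θ in (C / (ℓ : ℝ))..(π / 2),
          (4 / ((ℓ : ℝ) ^ 2 * ((ℓ : ℝ) + 1) ^ 2)) *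
            (legendreP ℓ (Real.cos θ) * Real.cos θ -
              deriv (deriv (legendreP ℓ)) (Real.cos θ) * Real.sin θ ^ 2) ^ 2 *
            ((4 / ((ℓ : ℝ) ^ 2 * ((ℓ : ℝ) + 1) ^ 2)) *
              (deriv (legendreP ℓ) (Real.cos θ)) ^ 2) *
            Real.sin θ| ≤ K / (ℓ : ℝ) ^ 2 := by
  refine ⟨128 * (1 + (π / (2 * C)) ^ 2), by positivity, ⌈2 * C / π⌉₊ + 1, fun n hn => ?_⟩
  have hn₀ : 0 < n := by omega
  have hCn : C / n ≤ π / 2 := by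
    have h : 2 * C / π ≤ n :=
      (Nat.le_ceil _).trans (by exact_mod_cast (by omega : ⌈2 * C / π⌉₊ ≤ n))
    rw [div_le_iff₀ pi_pos] at h
    rw [div_le_div_iff₀ (by positivity) two_pos]
    linarith
  rw [deriv_deriv_legendreP, deriv_legendreP, legendreP_eq_eval, ← Real.norm_eq_abs]
  beta_reduce
  set c := 32 * (1 + (π / (2 * C)) ^ 2) * (4 / (n * (n + 1)) ^ 2)
  calc _ ≤ ∫ θ in (C / n)..(π / 2), c * (sin θ * (derivative (legendrePoly n)).eval (cos θ) ^ 2) :=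
        norm_integral_le_of_norm_le hCn
          (.of_forall fun θ hθ => abs_legendre_integrand_le hC hn₀ ⟨hθ.1.le, hθ.2⟩)
          (Continuous.intervalIntegrable (by fun_prop) _ _)
    _ = c * ∫ θ in (C / n)..(π / 2), sin θ * (derivative (legendrePoly n)).eval (cos θ) ^ 2 :=
        integral_const_mul _ _
    _ ≤ c * (n * (n + 1)) := by
        gcongr
        exact integral_sin_mul_sq_eval_derivative_legendrePoly_cos_le n (by positivity) hCn
          (by linarith [pi_pos])
    _ = 128 * (1 + (π / (2 * C)) ^ 2) / (n * (n + 1)) := by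
        simp only [c]
        field_simp
        ring
    _ ≤ 128 * (1 + (π / (2 * C)) ^ 2) / n ^ 2 := by
        gcongr
        nlinarith
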